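/- arXiv:1811.07959 — 7 statements merged into one kernel-verified Lean document; each statement's English description precedes it below -/
import Mathlib

section
/- Let G = (X, E) be a connected graph (of any cardinality) with no induced path on four vertices. Then there exists a vertex x in X such that N_x is nonempty if and only if the complement graph of G is disconnected. -/
/-- `(a,b,c,d)` is an induced path on four vertices in `G`: the vertices are distinct
and the only edges among them are `ab`, `bc`, `cd`. -/
def IsInducedP4 {X : Type*} (G : SimpleGraph X) (a b c d : X) : Prop :=
  a ≠ b ∧ a ≠ c ∧ a ≠ d ∧ b ≠ c ∧ b ≠ d ∧ c ≠ d ∧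
  G.Adj a b ∧ G.Adj b c ∧ G.Adj c d ∧ ¬ G.Adj a c ∧ ¬ G.Adj a d ∧ ¬ G.Adj b d

/-- A graph is `P4`-free if it has no induced path on four vertices. -/
def P4Free {X : Type*} (G : SimpleGraph X) : Prop :=
  ∀ a b c d : X, ¬ IsInducedP4 G a b c d

/-- `inc(x)`: the set of non-neighbours of `x` other than `x` itself. -/
def incSet {X : Type*} (G : SimpleGraph X) (x : X) : Set X :=
  {y | y ≠ x ∧ ¬ G.Adj x y}

/-- `N_x`: the neighbours of `x` which are adjacent to every element of `inc(x)`. -/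
def NSet {X : Type*} (G : SimpleGraph X) (x : X) : Set X :=
  {y | G.Adj x y ∧ ∀ z ∈ incSet G x, G.Adj y z}

/-- `A` is a module of `G`: every vertex outside `A` is adjacent to all of `A` or to none of `A`. -/
def IsModule {X : Type*} (G : SimpleGraph X) (A : Set X) : Prop :=
  ∀ v ∉ A, (∀ a ∈ A, G.Adj v a) ∨ (∀ a ∈ A, ¬ G.Adj v a)

/-- A cograph: every induced subgraph with at least two vertices is disconnected or has a
disconnected complement. -/
def Cograph {X : Type*} (G : SimpleGraph X) : Prop :=
  ∀ s : Set X, s.Nontrivial → ¬ (G.induce s).Connected ∨ ¬ ((G.induce s)ᶜ).Connected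

/-! If `y ∈ N_x`, then `N_x` is completely joined to the rest of the graph: a vertex `b` outside
`N_x` that misses some `a ∈ N_x` must be a neighbour of `x` missing some `w ∈ inc(x)`, and then
`b - x - a - w` is an induced `P4`. Hence `x` and `y` lie in different components of the
complement. Conversely, if `y` is not reachable from `x` in the complement, then `x ~ y` and every
non-neighbour of `x` lies in the complement component of `x`, so is adjacent to `y`; thus
`y ∈ N_x`. -/

namespace SimpleGraph

variable {X : Type*} {G : SimpleGraph X}

lemma adj_of_not_reachable_compl {x y : X} (h : ¬ Gᶜ.Reachable x y) : G.Adj x y := by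
  by_contra hxy
  rcases eq_or_ne x y with rfl | hne
  · exact h .rfl
  · exact h ((G.compl_adj x y).mpr ⟨hne, hxy⟩).reachable

lemma not_reachable_compl_of_forall_adj {A : Set X} (hA : ∀ a ∈ A, ∀ b ∉ A, G.Adj a b)
    {a b : X} (ha : a ∈ A) (hb : b ∉ A) : ¬ Gᶜ.Reachable a b := by
  rintro ⟨p⟩
  obtain ⟨d, -, hd, hd'⟩ := p.exists_boundary_dart A ha hb
  exact d.adj.2 (hA _ hd _ hd')

lemma mem_NSet_of_not_reachable_compl {x y : X} (h : ¬ Gᶜ.Reachable x y) : y ∈ NSet G x := by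
  refine ⟨adj_of_not_reachable_compl h, fun z hz => adj_of_not_reachable_compl fun hzy => h ?_⟩
  exact ((G.compl_adj x z).mpr ⟨hz.1.symm, hz.2⟩).reachable.trans hzy.symm

end SimpleGraph

lemma P4Free.adj_of_mem_NSet_of_notMem {X : Type*} {G : SimpleGraph X} (hP4 : P4Free G)
    {x a b : X} (ha : a ∈ NSet G x) (hb : b ∉ NSet G x) : G.Adj a b := by
  obtain ⟨hxa, ha_inc⟩ := ha
  by_contra hab
  rcases eq_or_ne b x with rfl | hbx
  · exact hab hxa.symm
  by_cases hxb : G.Adj x b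
  · obtain ⟨w, hw, hbw⟩ : ∃ w ∈ incSet G x, ¬ G.Adj b w := by
      by_contra! h
      exact hb ⟨hxb, h⟩
    have haw := ha_inc w hw
    refine hP4 b x a w ⟨hxb.ne', ?_, ?_, hxa.ne, hw.1.symm, haw.ne, hxb.symm, hxa, haw,
      fun h => hab h.symm, hbw, hw.2⟩
    · rintro rfl
      exact hb ⟨hxa, ha_inc⟩
    · rintro rfl
      exact hw.2 hxb
  · exact hab (ha_inc b ⟨hbx, hxb⟩)

theorem exists_NSet_nonempty_iff_compl_not_connected
    {X : Type*} (G : SimpleGraph X) (hconn : G.Connected) (hP4 : P4Free G) :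
    (∃ x : X, (NSet G x).Nonempty) ↔ ¬ Gᶜ.Connected := by
  constructor
  · rintro ⟨x, y, hy⟩ hc
    have hx : x ∉ NSet G x := fun h => G.irrefl h.1
    exact SimpleGraph.not_reachable_compl_of_forall_adj
      (fun _ ha _ hb => hP4.adj_of_mem_NSet_of_notMem ha hb) hy hx (hc.preconnected y x)
  · intro hc
    obtain ⟨x⟩ := hconn.nonempty
    obtain ⟨y, hxy⟩ : ∃ y, ¬ Gᶜ.Reachable x y := by
      by_contra! h
      exact hc ((SimpleGraph.connected_iff_exists_forall_reachable _).mpr ⟨x, h⟩)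
    exact ⟨x, y, SimpleGraph.mem_NSet_of_not_reachable_compl hxy⟩
end

section
/- A finite graph G is a cograph if and only if G has no induced path on four vertices. -/
/-!
An induced `P4` is connected and self-complementary, so a cograph has none. Conversely, induced
subgraphs of a `P4`-free graph are `P4`-free, so it suffices to show that a finite, connected,
`P4`-free graph `G` on at least two vertices has disconnected complement. Fix a vertex `x`.
Excluding `P4`s, every vertex outside `N_x` is adjacent to all of `N_x`, so no edge of `Gᶜ`
leaves `N_x`. Since every vertex of `inc(x)` is at distance two from `x`, a neighbour of `x`
whose neighbourhood in `inc(x)` is maximal for inclusion lies in `N_x`. As `x ∉ N_x`, the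
complement is disconnected.
-/

namespace SimpleGraph

lemma compl_induce {X : Type*} (G : SimpleGraph X) (s : Set X) :
    (G.induce s)ᶜ = Gᶜ.induce s := by
  ext u v
  simp [Subtype.ext_iff]

end SimpleGraph

open SimpleGraph

section

variable {X Y : Type*} {G : SimpleGraph X} {a b c d v x y z : X}

lemma isInducedP4_of_adj (hab : G.Adj a b) (hbc : G.Adj b c) (hcd : G.Adj c d)
    (hac : ¬ G.Adj a c) (had : ¬ G.Adj a d) (hbd : ¬ G.Adj b d) : IsInducedP4 G a b c d := by
  refine ⟨hab.ne, ?_, ?_, hbc.ne, ?_, hcd.ne, hab, hbc, hcd, hac, had, hbd⟩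
  · rintro rfl
    exact had hcd
  · rintro rfl
    exact hac hcd.symm
  · rintro rfl
    exact had hab

lemma IsInducedP4.compl (hp : IsInducedP4 G a b c d) : IsInducedP4 Gᶜ b d a c := by
  obtain ⟨-, hac, had, -, hbd, -, eab, ebc, ecd, nac, nad, nbd⟩ := hp
  exact isInducedP4_of_adj ⟨hbd, nbd⟩ ⟨had.symm, fun e => nad e.symm⟩ ⟨hac, nac⟩
    (fun e => e.2 eab.symm) (fun e => e.2 ebc) (fun e => e.2 ecd.symm)

lemma IsInducedP4.induce_connected (hp : IsInducedP4 G a b c d) :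
    (G.induce {a, b, c, d}).Connected := by
  obtain ⟨-, -, -, -, -, -, hab, hbc, hcd, -⟩ := hp
  let p : G.Walk a d := .cons hab (.cons hbc (.cons hcd .nil))
  have hsupp : {v | v ∈ p.support} = {a, b, c, d} := by ext; simp [p]
  exact hsupp ▸ p.connected_induce_support

lemma IsInducedP4.compl_induce_connected (hp : IsInducedP4 G a b c d) :
    (G.induce {a, b, c, d})ᶜ.Connected := by
  have hperm : ({a, b, c, d} : Set X) = {b, d, a, c} := by
    ext
    simp only [Set.mem_insert_iff, Set.mem_singleton_iff]
    tauto
  rw [compl_induce, hperm]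
  exact hp.compl.induce_connected

lemma P4Free.comap_embedding {H : SimpleGraph Y} (f : H ↪g G) (hP : P4Free G) : P4Free H :=
  fun a b c d ⟨_, _, _, _, _, _, hab, hbc, hcd, hac, had, hbd⟩ => hP (f a) (f b) (f c) (f d) <|
    isInducedP4_of_adj (f.map_adj_iff.2 hab) (f.map_adj_iff.2 hbc) (f.map_adj_iff.2 hcd)
      (mt f.map_adj_iff.1 hac) (mt f.map_adj_iff.1 had) (mt f.map_adj_iff.1 hbd)

lemma P4Free.eq_or_adj_or_exists_adj_adj (hP : P4Free G) (h : G.Reachable z x) :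
    z = x ∨ G.Adj x z ∨ ∃ u, G.Adj x u ∧ G.Adj u z := by
  obtain ⟨w⟩ := h
  induction w with
  | nil => exact .inl rfl
  | @cons a b x hab _ ih =>
    by_contra! hfar
    obtain ⟨hax, hxa, hfar⟩ := hfar
    rcases ih with rfl | hxb | ⟨u, hxu, hub⟩
    · exact hxa hab.symm
    · exact hfar b hxb hab.symm
    · refine hP a b u x (isInducedP4_of_adj hab hub.symm hxu.symm ?_ (hxa ∘ .symm) ?_)
      · exact fun hau => hfar u hxu hau.symm
      · exact fun hbx => hfar b hbx.symm hab.symm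

lemma P4Free.exists_adj_adj_of_mem_incSet (hP : P4Free G) (hc : G.Connected)
    (hz : z ∈ incSet G x) : ∃ u, G.Adj x u ∧ G.Adj u z :=
  ((hP.eq_or_adj_or_exists_adj_adj (hc z x)).resolve_left hz.1).resolve_left hz.2

lemma P4Free.adj_of_mem_NSet (hP : P4Free G) (hy : y ∈ NSet G x) (hv : v ∉ NSet G x) :
    G.Adj v y := by
  by_cases hvx : v = x
  · exact hvx ▸ hy.1
  by_cases hxv : G.Adj x v
  · obtain ⟨z, hz, hvz⟩ : ∃ z ∈ incSet G x, ¬ G.Adj v z := by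
      by_contra! hall
      exact hv ⟨hxv, hall⟩
    by_contra hvy
    exact hP z y x v (isInducedP4_of_adj (hy.2 z hz).symm hy.1.symm hxv (hz.2 ∘ .symm)
      (hvz ∘ .symm) (hvy ∘ .symm))
  · exact (hy.2 v ⟨hvx, hxv⟩).symm

lemma P4Free.mem_NSet_of_maximalFor (hP : P4Free G) (hc : G.Connected)
    (hy : MaximalFor (G.Adj x) (fun u => incSet G x ∩ G.neighborSet u) y) : y ∈ NSet G x := by
  refine ⟨hy.1, fun z hz => ?_⟩
  by_contra hyz
  obtain ⟨u, hxu, huz⟩ := hP.exists_adj_adj_of_mem_incSet hc hz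
  by_cases hyu : G.Adj y u
  · obtain ⟨z', ⟨hz', hyz'⟩, huz'⟩ : ∃ z' ∈ incSet G x ∩ G.neighborSet y, ¬ G.Adj u z' := by
      by_contra! hsub
      exact hyz (hy.2 hxu (fun w hw => ⟨hw.1, hsub w hw⟩) ⟨hz, huz⟩).2
    by_cases hzz' : G.Adj z z'
    · exact hP z z' y x (isInducedP4_of_adj hzz' hyz'.symm hy.1.symm (hyz ∘ .symm)
        (hz.2 ∘ .symm) (hz'.2 ∘ .symm))
    · exact hP z' y u z (isInducedP4_of_adj hyz'.symm hyu huz (huz' ∘ .symm) (hzz' ∘ .symm) hyz)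
  · exact hP z u x y (isInducedP4_of_adj huz.symm hxu.symm hy.1 (hz.2 ∘ .symm) (hyz ∘ .symm)
      (hyu ∘ .symm))

lemma P4Free.NSet_nonempty [Finite X] [Nontrivial X] (hP : P4Free G) (hc : G.Connected) (x : X) :
    (NSet G x).Nonempty :=
  have ⟨_, hy⟩ := (Set.toFinite {u | G.Adj x u}).exists_maximalFor
    (fun u => incSet G x ∩ G.neighborSet u) _ (hc.preconnected.exists_adj_of_nontrivial x)
  ⟨_, hP.mem_NSet_of_maximalFor hc hy⟩

lemma P4Free.not_connected_compl [Finite X] [Nontrivial X] (hP : P4Free G) (hc : G.Connected) :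
    ¬ Gᶜ.Connected := by
  intro hcc
  obtain ⟨x⟩ : Nonempty X := inferInstance
  obtain ⟨y, hy⟩ := hP.NSet_nonempty hc x
  obtain ⟨e, -, he, he'⟩ :=
    (hcc.preconnected y x).some.exists_boundary_dart _ hy (fun hx => G.irrefl hx.1)
  exact e.adj.2 (hP.adj_of_mem_NSet he he').symm

end

theorem finite_cograph_iff_P4Free
    {X : Type*} [Fintype X] (G : SimpleGraph X) :
    Cograph G ↔ P4Free G := by
  refine ⟨fun hco a b c d hp => ?_, fun hP s hs => ?_⟩
  · rcases hco {a, b, c, d} ⟨a, by simp, b, by simp, hp.1⟩ with h | h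
    exacts [h hp.induce_connected, h hp.compl_induce_connected]
  · have := hs.coe_sort
    rw [or_iff_not_imp_left, not_not]
    exact (hP.comap_embedding (Embedding.induce s)).not_connected_compl
end

section
/- Every cograph (of any cardinality) has no induced path on four vertices. -/
/-!
The complement of an induced `P₄` `a-b-c-d` is again an induced `P₄`, namely `c-a-d-b`, on the
same four vertices. Both paths are connected, so the subgraph induced on `{a, b, c, d}` and its
complement are connected, which a cograph forbids.
-/

namespace SimpleGraph

variable {X : Type*} (G : SimpleGraph X)

lemma induce_compl (s : Set X) : (G.induce s)ᶜ = Gᶜ.induce s := by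
  ext u v
  simp [Subtype.ext_iff]

variable {G}

lemma induce_connected_of_adj_of_adj_of_adj {a b c d : X}
    (hab : G.Adj a b) (hbc : G.Adj b c) (hcd : G.Adj c d) :
    (G.induce {a, b, c, d}).Connected := by
  have hsupport : ({a, b, c, d} : Set X) = {v | v ∈ [a, b, c, d]} := by
    ext
    simp
  rw [hsupport]
  exact (Walk.cons hab (Walk.cons hbc (Walk.cons hcd Walk.nil))).connected_induce_support

end SimpleGraph

namespace IsInducedP4

variable {X : Type*} {G : SimpleGraph X} {a b c d : X}

lemma compl_s3 (h : IsInducedP4 G a b c d) : IsInducedP4 Gᶜ c a d b := by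
  obtain ⟨hab, hac, had, hbc, hbd, hcd, Gab, Gbc, Gcd, nGac, nGad, nGbd⟩ := h
  simp only [IsInducedP4, SimpleGraph.compl_adj, ne_eq, not_and, not_not]
  refine ⟨Ne.symm hac, hcd, Ne.symm hbc, had, hab, Ne.symm hbd, ⟨Ne.symm hac, fun h => nGac h.symm⟩,
    ⟨had, nGad⟩, ⟨Ne.symm hbd, fun h => nGbd h.symm⟩, fun _ => Gcd, fun _ => Gbc.symm,
    fun _ => Gab⟩

lemma induce_connected_s3 (h : IsInducedP4 G a b c d) : (G.induce {a, b, c, d}).Connected := by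
  obtain ⟨-, -, -, -, -, -, hab, hbc, hcd, -⟩ := h
  exact SimpleGraph.induce_connected_of_adj_of_adj_of_adj hab hbc hcd

end IsInducedP4

theorem P4Free_of_cograph {X : Type*} (G : SimpleGraph X) (h : Cograph G) :
    P4Free G := by
  intro a b c d hP
  have hperm : ({c, a, d, b} : Set X) = {a, b, c, d} := by
    ext
    simp only [Set.mem_insert_iff, Set.mem_singleton_iff]
    tauto
  rcases h {a, b, c, d} ⟨a, by simp, b, by simp, hP.1⟩ with hG | hGc
  · exact hG hP.induce_connected_s3
  · rw [SimpleGraph.induce_compl, ← hperm] at hGc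
    exact hGc hP.compl_s3.induce_connected_s3
end

section
/- Let G = (X, E) be a connected graph (of any cardinality) with no induced path on four vertices, and let x ∈ X. Then every connected component of the subgraph of G induced on inc(x) is a module of G. -/
/-!
A vertex `v ∉ inc(x)` other than `x` is a neighbour of `x`. If `v` is adjacent to `a ∈ inc(x)`
and `a u` is an edge inside `inc(x)`, then `v` is adjacent to `u`, since otherwise `x v a u` is an
induced `P4`; so adjacency to `v` spreads over each component of `inc(x)`. The remaining vertices
are `x`, which sees nothing in `inc(x)`, and vertices of `inc(x)`, which see a component only if
they belong to it.
-/

theorem P4Free.adj_of_adj_of_not_adj {X : Type*} {G : SimpleGraph X} (hP4 : P4Free G)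
    {x v a u : X} (hxv : G.Adj x v) (hva : G.Adj v a) (hau : G.Adj a u)
    (hxa : ¬ G.Adj x a) (hxu : ¬ G.Adj x u) :
    G.Adj v u := by
  by_contra hvu
  have hxa' : x ≠ a := by rintro rfl; exact hxu hau
  have hxu' : x ≠ u := by rintro rfl; exact hxa hau.symm
  have hvu' : v ≠ u := by rintro rfl; exact hxu hxv
  exact hP4 x v a u ⟨hxv.ne, hxa', hxu', hva.ne, hvu', hau.ne, hxv, hva, hau, hxa, hxu, hvu⟩

namespace SimpleGraph

variable {X : Type*} {G : SimpleGraph X}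

theorem adj_of_reachable_induce {s : Set X} {v : X}
    (hprop : ∀ a u : s, G.Adj a u → G.Adj v a → G.Adj v u) {a b : s}
    (hab : (G.induce s).Reachable a b) (hva : G.Adj v a) : G.Adj v b := by
  rw [reachable_iff_reflTransGen] at hab
  induction hab with
  | refl => exact hva
  | tail _ hcd ih => exact hprop _ _ hcd ih

theorem isModule_image_supp_of_adj_propagates {s : Set X}
    (hprop : ∀ v ∉ s, ∀ a u : s, G.Adj a u → G.Adj v a → G.Adj v u)
    (c : (G.induce s).ConnectedComponent) : IsModule G (Subtype.val '' c.supp) := by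
  intro v hvc
  by_cases hvs : v ∈ s
  · right
    rintro _ ⟨b, hb, rfl⟩ hvb
    exact hvc ⟨⟨v, hvs⟩, c.mem_supp_of_adj_mem_supp hb (G.induce s |>.adj_symm hvb), rfl⟩
  by_cases hex : ∃ a ∈ c.supp, G.Adj v a
  · left
    obtain ⟨a, ha, hva⟩ := hex
    rintro _ ⟨b, hb, rfl⟩
    exact adj_of_reachable_induce (hprop v hvs) (c.reachable_of_mem_supp ha hb) hva
  · right
    rintro _ ⟨a, ha, rfl⟩ hva
    exact hex ⟨a, ha, hva⟩

end SimpleGraph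

theorem component_of_incSet_isModule_general
    {X : Type*} (G : SimpleGraph X) (hP4 : P4Free G) (x : X) :
    ∀ c : (G.induce (incSet G x)).ConnectedComponent,
      IsModule G (Subtype.val '' c.supp) := by
  refine SimpleGraph.isModule_image_supp_of_adj_propagates fun v hv a u hau hva => ?_
  have hxv : G.Adj x v := by
    by_contra hxv
    exact hv ⟨fun hvx => a.2.2 (hvx ▸ hva), hxv⟩
  exact hP4.adj_of_adj_of_not_adj hxv hva hau a.2.2 u.2.2

theorem component_of_incSet_isModule
    {X : Type*} (G : SimpleGraph X) (hconn : G.Connected) (hP4 : P4Free G) (x : X) :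
    ∀ c : (G.induce (incSet G x)).ConnectedComponent,
      IsModule G (Subtype.val '' c.supp) :=
  component_of_incSet_isModule_general G hP4 x
end

section
/- Let G = (X, E) be a connected graph (of any cardinality) with no induced path on four vertices, and let x ∈ X. For every connected component C of the subgraph of G induced on inc(x), the set N(x) is partitioned into the set N_1 of vertices of N(x) adjacent to every element of C and the set N_2 of vertices of N(x) adjacent to no element of C, and every element of N_1 is adjacent to every element of N_2. -/
/-!
If a neighbour `y` of `x` were adjacent to `u ∈ inc(x)` but not to a neighbour `v` of `u`
inside `inc(x)`, then `x y u v` would be an induced `P4`; hence along walks in `inc(x)` the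
adjacency to `y` propagates, and `y` sees all or none of each component `C`. If `y₁` sees `C`,
`y₂` does not and `y₁ y₂` is not an edge, then `z y₁ x y₂` is an induced `P4` for any `z ∈ C`.
-/

namespace P4Free

variable {X : Type*} {G : SimpleGraph X}

theorem adj_of_adj_of_adj_of_adj (hP4 : P4Free G) {a b c d : X} (hab : G.Adj a b)
    (hbc : G.Adj b c) (hcd : G.Adj c d) (hac : ¬ G.Adj a c) (had : ¬ G.Adj a d) :
    G.Adj b d := by
  by_contra hbd
  -- the four vertices are distinct because of the edges and non-edges among them
  refine hP4 a b c d ⟨hab.ne, ?_, ?_, hbc.ne, ?_, hcd.ne, hab, hbc, hcd, hac, had, hbd⟩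
  · rintro rfl; exact had hcd
  · rintro rfl; exact hac hcd.symm
  · rintro rfl; exact had hab

theorem adj_of_reachable_incSet (hP4 : P4Free G) {x y : X} (hxy : G.Adj x y)
    {u v : incSet G x} (huv : (G.induce (incSet G x)).Reachable u v) (hyu : G.Adj y u) :
    G.Adj y v := by
  obtain ⟨p⟩ := huv
  induction p with
  | nil => exact hyu
  | @cons a b _ hab _ ih =>
    exact ih (hP4.adj_of_adj_of_adj_of_adj hxy hyu hab a.2.2 b.2.2)

theorem adj_all_or_none_of_adj (hP4 : P4Free G) {x y : X} (hxy : G.Adj x y)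
    (c : (G.induce (incSet G x)).ConnectedComponent) :
    (∀ z ∈ Subtype.val '' c.supp, G.Adj y z) ∨ (∀ z ∈ Subtype.val '' c.supp, ¬ G.Adj y z) := by
  refine or_iff_not_imp_right.mpr fun h ↦ ?_
  push Not at h
  obtain ⟨_, ⟨u, hu, rfl⟩, hyu⟩ := h
  rintro _ ⟨v, hv, rfl⟩
  exact hP4.adj_of_reachable_incSet hxy
    (SimpleGraph.ConnectedComponent.exact (hu.trans hv.symm)) hyu

end P4Free

theorem component_partitions_neighborhood_general
    {X : Type*} (G : SimpleGraph X) (hP4 : P4Free G) (x : X) :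
    ∀ c : (G.induce (incSet G x)).ConnectedComponent,
      (({y | G.Adj x y ∧ ∀ z ∈ Subtype.val '' c.supp, G.Adj y z} ∪
        {y | G.Adj x y ∧ ∀ z ∈ Subtype.val '' c.supp, ¬ G.Adj y z}) = G.neighborSet x) ∧
      Disjoint {y | G.Adj x y ∧ ∀ z ∈ Subtype.val '' c.supp, G.Adj y z}
        {y | G.Adj x y ∧ ∀ z ∈ Subtype.val '' c.supp, ¬ G.Adj y z} ∧
      (∀ y₁ ∈ {y | G.Adj x y ∧ ∀ z ∈ Subtype.val '' c.supp, G.Adj y z},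
        ∀ y₂ ∈ {y | G.Adj x y ∧ ∀ z ∈ Subtype.val '' c.supp, ¬ G.Adj y z},
          G.Adj y₁ y₂) := by
  intro c
  obtain ⟨z, hz⟩ := c.exists_rep
  have hzc : z.1 ∈ Subtype.val '' c.supp := ⟨z, hz, rfl⟩
  refine ⟨?_, ?_, ?_⟩
  · ext y
    refine ⟨fun hy ↦ hy.elim And.left And.left, fun hxy ↦ ?_⟩
    exact (hP4.adj_all_or_none_of_adj hxy c).imp (⟨hxy, ·⟩) (⟨hxy, ·⟩)
  · exact Set.disjoint_left.mpr fun y hy₁ hy₂ ↦ hy₂.2 z hzc (hy₁.2 z hzc)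
  · rintro y₁ ⟨hxy₁, hy₁⟩ y₂ ⟨hxy₂, hy₂⟩
    exact hP4.adj_of_adj_of_adj_of_adj (hy₁ z hzc).symm hxy₁.symm hxy₂
      (fun h ↦ z.2.2 h.symm) fun h ↦ hy₂ z hzc h.symm

theorem component_partitions_neighborhood
    {X : Type*} (G : SimpleGraph X) (hconn : G.Connected) (hP4 : P4Free G) (x : X) :
    ∀ c : (G.induce (incSet G x)).ConnectedComponent,
      (({y | G.Adj x y ∧ ∀ z ∈ Subtype.val '' c.supp, G.Adj y z} ∪
        {y | G.Adj x y ∧ ∀ z ∈ Subtype.val '' c.supp, ¬ G.Adj y z}) = G.neighborSet x) ∧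
      Disjoint {y | G.Adj x y ∧ ∀ z ∈ Subtype.val '' c.supp, G.Adj y z}
        {y | G.Adj x y ∧ ∀ z ∈ Subtype.val '' c.supp, ¬ G.Adj y z} ∧
      (∀ y₁ ∈ {y | G.Adj x y ∧ ∀ z ∈ Subtype.val '' c.supp, G.Adj y z},
        ∀ y₂ ∈ {y | G.Adj x y ∧ ∀ z ∈ Subtype.val '' c.supp, ¬ G.Adj y z},
          G.Adj y₁ y₂) :=
  component_partitions_neighborhood_general G hP4 x
end

section
/- Let G = (X, E) be a connected graph (of any cardinality) with no induced path on four vertices, and let x ∈ X be such that N_x is nonempty. Then every vertex of N_x is adjacent to every vertex of X \ N_x. -/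
/-! A neighbour `z` of `x` outside `N_x` misses some `w ∈ inc(x)`; for `y ∈ N_x`, the path
`z x y w` has the non-edges `zw` and `xw`, so `P4`-freeness forces the chord `zy`. Every other
vertex outside `N_x` is `x` itself or lies in `inc(x)`. -/

section

variable {X : Type*} {G : SimpleGraph X}

theorem isInducedP4_of_adj_of_not_adj {a b c d : X} (hab : G.Adj a b) (hbc : G.Adj b c)
    (hcd : G.Adj c d) (hac : ¬ G.Adj a c) (had : ¬ G.Adj a d) (hbd : ¬ G.Adj b d) :
    IsInducedP4 G a b c d := by
  refine ⟨hab.ne, ?_, ?_, hbc.ne, ?_, hcd.ne, hab, hbc, hcd, hac, had, hbd⟩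
  · rintro rfl; exact had hcd
  · rintro rfl; exact hac hcd.symm
  · rintro rfl; exact had hab

theorem P4Free.adj_of_adj_of_adj_of_adj_s6 (hP4 : P4Free G) {a b c d : X} (hab : G.Adj a b)
    (hbc : G.Adj b c) (hcd : G.Adj c d) (had : ¬ G.Adj a d) (hbd : ¬ G.Adj b d) :
    G.Adj a c := by
  by_contra hac
  exact hP4 a b c d (isInducedP4_of_adj_of_not_adj hab hbc hcd hac had hbd)

theorem exists_mem_incSet_not_adj {x z : X} (hxz : G.Adj x z) (hz : z ∉ NSet G x) :
    ∃ w ∈ incSet G x, ¬ G.Adj z w := by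
  simpa [NSet, hxz] using hz

end

theorem NSet_adj_compl_general
    {X : Type*} (G : SimpleGraph X) (hP4 : P4Free G)
    (x : X) :
    ∀ y ∈ NSet G x, ∀ z ∉ NSet G x, G.Adj y z := by
  rintro y ⟨hxy, hy_inc⟩ z hz
  by_cases hzx : z = x
  · exact hzx ▸ hxy.symm
  by_cases hxz : G.Adj x z
  · obtain ⟨w, hw, hzw⟩ := exists_mem_incSet_not_adj hxz hz
    exact (hP4.adj_of_adj_of_adj_of_adj_s6 hxz.symm hxy (hy_inc w hw) hzw hw.2).symm
  · exact hy_inc z ⟨hzx, hxz⟩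

theorem NSet_adj_compl
    {X : Type*} (G : SimpleGraph X) (hconn : G.Connected) (hP4 : P4Free G)
    (x : X) (hne : (NSet G x).Nonempty) :
    ∀ y ∈ NSet G x, ∀ z ∉ NSet G x, G.Adj y z :=
  NSet_adj_compl_general G hP4 x
end

section
/- Let P = (X, ≤) be a poset. Then P is N-free if and only if for every x ∈ X, every connected component of the comparability graph of P restricted to inc(x) is a module of P. -/
/-- `(a,b,c,d)` is an `N` in the poset: the four elements are distinct, `a < b`, `c < b`,
`c < d`, and these are the only comparabilities among them. -/
def IsN {X : Type*} [PartialOrder X] (a b c d : X) : Prop :=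
  a ≠ b ∧ a ≠ c ∧ a ≠ d ∧ b ≠ c ∧ b ≠ d ∧ c ≠ d ∧
  a < b ∧ c < b ∧ c < d ∧
  (¬ a ≤ c ∧ ¬ c ≤ a) ∧ (¬ a ≤ d ∧ ¬ d ≤ a) ∧ (¬ b ≤ d ∧ ¬ d ≤ b)

/-- A poset is `N`-free if it contains no `N`. -/
def NFree (X : Type*) [PartialOrder X] : Prop :=
  ∀ a b c d : X, ¬ IsN a b c d

/-- `inc(x)`: the set of elements incomparable to `x`. -/
def incP {X : Type*} [PartialOrder X] (x : X) : Set X :=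
  {y | ¬ x ≤ y ∧ ¬ y ≤ x}

/-- The comparability graph of a poset. -/
def compGraph (X : Type*) [PartialOrder X] : SimpleGraph X where
  Adj u v := u < v ∨ v < u
  symm := by refine ⟨?_⟩; intro u v h; exact h.symm
  loopless := by refine ⟨?_⟩; intro u h; rcases h with h | h <;> exact lt_irrefl u h

/-- `A` is a module of the poset: every element outside `A` relates in the same way
to all elements of `A`. -/
def PModule {X : Type*} [PartialOrder X] (A : Set X) : Prop :=
  ∀ v ∉ A, ∀ a ∈ A, ∀ a' ∈ A, (v < a → v < a') ∧ (a < v → a' < v)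

/-- `C⁺_x`: elements above `x` comparable to all elements of `inc(x)`. -/
def Cplus {X : Type*} [PartialOrder X] (x : X) : Set X :=
  {y | x < y ∧ ∀ z ∈ incP x, (y ≤ z ∨ z ≤ y)}

/-- `C⁻_x`: elements below `x` comparable to all elements of `inc(x)`. -/
def Cminus {X : Type*} [PartialOrder X] (x : X) : Set X :=
  {y | y < x ∧ ∀ z ∈ incP x, (y ≤ z ∨ z ≤ y)}

/-- A poset is chain complete if every nonempty chain has a supremum and an infimum. -/
def ChainComplete (X : Type*) [PartialOrder X] : Prop :=
  ∀ C : Set X, C.Nonempty → IsChain (· ≤ ·) C → (∃ s, IsLUB C s) ∧ (∃ i, IsGLB C i)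


/-!
If `x < v` and `u < v` for some `u ∈ inc(x)`, then every `m ∈ inc(x)` comparable to `u` also
lies below `v`: for `m < u` this is transitivity, and for `u < m` the alternative is that
`(x, v, u, m)` is an `N`. Hence, in an `N`-free poset, being below `v` propagates along the
comparability graph on `inc(x)`, and dually for being above `v`; elements of `inc(x)` itself
cannot be comparable to a component without belonging to it. Conversely, in an `N` `(a, b, c, d)`
the edge `c < d` lies in one component of `inc(a)`, which `b` sees as `c < b` but `d ∥ b`.
-/

open OrderDual

theorem SimpleGraph.Reachable.imp_of_adj {V : Type*} {G : SimpleGraph V} {u w : V}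
    (h : G.Reachable u w) {p : V → Prop} (hp : ∀ ⦃u w⦄, G.Adj u w → p u → p w) : p u → p w := by
  obtain ⟨q⟩ := h
  induction q with
  | nil => exact id
  | cons hadj _ ih => exact ih ∘ hp hadj

section

variable {X : Type*} [PartialOrder X]

theorem isN_iff {a b c d : X} :
    IsN a b c d ↔ a < b ∧ c < b ∧ c < d ∧ c ∈ incP a ∧ d ∈ incP a ∧ d ∈ incP b := by
  refine ⟨fun ⟨_, _, _, _, _, _, hab, hcb, hcd, hac, had, hbd⟩ => ⟨hab, hcb, hcd, hac, had, hbd⟩,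
    fun ⟨hab, hcb, hcd, hac, had, hbd⟩ => ?_⟩
  exact ⟨hab.ne, fun h => hac.1 h.le, fun h => had.1 h.le, hcb.ne', fun h => hbd.1 h.le, hcd.ne,
    hab, hcb, hcd, hac, had, hbd⟩

theorem NFree.dual (hN : NFree X) : NFree Xᵒᵈ := by
  intro a b c d h
  obtain ⟨hab, hcb, hcd, hac, had, hbd⟩ := isN_iff.1 h
  exact hN (ofDual d) (ofDual c) (ofDual b) (ofDual a) (isN_iff.2 ⟨hcd, hcb, hab, hbd, had, hac⟩)

theorem NFree.lt_of_lt_of_lt {x v u m : X} (hN : NFree X) (hxv : x ≤ v) (hu : u ∈ incP x)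
    (hm : m ∈ incP x) (huv : u < v) (hum : u < m) : m < v := by
  have hxv' : x < v := hxv.lt_of_ne (by rintro rfl; exact hu.2 huv.le)
  by_contra hmv
  refine hN x v u m (isN_iff.2 ⟨hxv', huv, hum, hu, hm, fun hvm => hm.1 (hxv.trans hvm), ?_⟩)
  exact fun hmv' => hmv (hmv'.lt_of_ne (by rintro rfl; exact hm.1 hxv))

theorem NFree.lt_of_lt_of_lt' {x v u m : X} (hN : NFree X) (hvx : v ≤ x) (hu : u ∈ incP x)
    (hm : m ∈ incP x) (hvu : v < u) (hmu : m < u) : v < m :=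
  hN.dual.lt_of_lt_of_lt (x := toDual x) (v := toDual v) hvx ⟨hu.2, hu.1⟩ ⟨hm.2, hm.1⟩ hvu hmu

theorem NFree.lt_of_reachable_of_lt {x v : X} (hN : NFree X) (hxv : x ≤ v) {u m : incP x}
    (h : ((compGraph X).induce (incP x)).Reachable u m) : (u : X) < v → (m : X) < v :=
  h.imp_of_adj fun u m hum huv =>
    hum.elim (hN.lt_of_lt_of_lt hxv u.2 m.2 huv) fun hmu => hmu.trans huv

theorem NFree.lt_of_reachable_of_gt {x v : X} (hN : NFree X) (hvx : v ≤ x) {u m : incP x}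
    (h : ((compGraph X).induce (incP x)).Reachable u m) : v < (u : X) → v < (m : X) :=
  h.imp_of_adj fun u m hum hvu =>
    hum.elim hvu.trans (hN.lt_of_lt_of_lt' hvx u.2 m.2 hvu)

theorem NFree.pModule_supp {x : X} (hN : NFree X)
    (c : ((compGraph X).induce (incP x)).ConnectedComponent) :
    PModule (Subtype.val '' c.supp) := by
  rintro v hv _ ⟨a, ha, rfl⟩ _ ⟨a', ha', rfl⟩
  have hr := c.reachable_of_mem_supp ha ha'
  by_cases hvx : v ∈ incP x
  · have hinc : ¬ ((a : X) < v ∨ v < a) := fun hadj =>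
      hv ⟨⟨v, hvx⟩, c.mem_supp_of_adj_mem_supp ha hadj, rfl⟩
    exact ⟨fun hva => (hinc (Or.inr hva)).elim, fun hav => (hinc (Or.inl hav)).elim⟩
  rcases or_iff_not_and_not.2 hvx with hxv | hvx
  · exact ⟨fun hva => (a.2.1 (hxv.trans hva.le)).elim, hN.lt_of_reachable_of_lt hxv hr⟩
  · exact ⟨hN.lt_of_reachable_of_gt hvx hr, fun hav => (a.2.2 (hav.le.trans hvx)).elim⟩

theorem IsN.exists_not_pModule_supp {a b c d : X} (h : IsN a b c d) :
    ∃ C : ((compGraph X).induce (incP a)).ConnectedComponent,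
      ¬ PModule (Subtype.val '' C.supp) := by
  obtain ⟨hab, hcb, hcd, hc, hd, hdb⟩ := isN_iff.1 h
  set C := ((compGraph X).induce (incP a)).connectedComponentMk ⟨c, hc⟩
  have hbC : b ∉ Subtype.val '' C.supp := by
    rintro ⟨b', -, rfl⟩
    exact b'.2.1 hab.le
  have hdC : d ∈ Subtype.val '' C.supp :=
    ⟨⟨d, hd⟩, C.mem_supp_of_adj_mem_supp rfl (Or.inl hcd), rfl⟩
  exact ⟨C, fun hC => hdb.2 ((hC b hbC c ⟨⟨c, hc⟩, rfl, rfl⟩ d hdC).2 hcb).le⟩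

end

theorem nfree_iff_components_of_incP_are_modules
    {X : Type*} [PartialOrder X] :
    NFree X ↔ ∀ x : X, ∀ c : ((compGraph X).induce (incP x)).ConnectedComponent,
      PModule (Subtype.val '' c.supp) := by
  refine ⟨fun hN x c => hN.pModule_supp c, fun h a b c d habcd => ?_⟩
  obtain ⟨C, hC⟩ := habcd.exists_not_pModule_supp
  exact hC (h a C)
end
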